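/- Let Θ = diag(Θ₁,…,Θₙ) be a diagonal n×n matrix with Θⱼ > 0 for all j, and let A be a real m×n matrix with m ≤ n/2. Set ρ = m/n, H = Θ⁻¹ + AᵀA and P = Θ⁻¹ + ρ Iₙ. Let C > 0 be any constant, let l = #{j : Θⱼ⁻¹ < C}, and suppose there exists 0 < δ_l < 1 such that every m×l submatrix B formed of l distinct columns of A satisfies ‖(n/m)·BᵀB − I_l‖₂ ≤ δ_l. If the rows of A are nearly orthonormal, i.e. ‖AAᵀ − I_m‖₂ ≤ δ for some δ ≥ 0, then every eigenvalue λ of P⁻¹H satisfies |λ − 1| ≤ δ_l + (1/4)·(1 + δ − ρ + 2√(1+δ))²/(ρ δ_l C). -/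

import Mathlib

open scoped BigOperators Matrix.Norms.L2Operator
open Matrix

/-!
If `P⁻¹ H v = λ v`, then `(λ - 1) vᵀ P v = ‖A v‖² - ρ ‖v‖²`, so it suffices to bound this
quadratic form by a multiple of `vᵀ P v`. Split `v = x + y`, with `x` supported on the `l`
coordinates where `Θⱼ⁻¹ < C`. Property P2 for these columns gives
`|‖A x‖² - ρ ‖x‖²| ≤ ρ δ_l ‖x‖²`, property P1 gives `‖A y‖² ≤ (1 + δ) ‖y‖²`, and Cauchy–Schwarz
bounds the cross term, while `vᵀ P v ≥ ρ ‖x‖² + C ‖y‖²`. Comparing the two quadratic forms in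
`(‖x‖, ‖y‖)` by AM–GM produces the stated constant.
-/

/-- Property P2: every `m × k` submatrix `B` formed of `k` distinct columns of `A`
satisfies `‖(n/m)·BᵀB − I_k‖₂ ≤ δ` (the norm is the spectral norm). -/
def PropP2 (m n k : ℕ) (A : Matrix (Fin m) (Fin n) ℝ) (δ : ℝ) : Prop :=
  ∀ g : Fin k → Fin n, Function.Injective g →
    ‖((n : ℝ) / m) • ((A.submatrix id g)ᵀ * (A.submatrix id g)) - 1‖ ≤ δ

section QuadraticForms

variable {ι κ : Type*} [Fintype ι] [Fintype κ]

lemma dotProduct_self_nonneg (x : ι → ℝ) : 0 ≤ x ⬝ᵥ x := by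
  simpa using dotProduct_self_star_nonneg x

lemma norm_toLp_sq (x : ι → ℝ) : ‖(WithLp.toLp 2 x : EuclideanSpace ℝ ι)‖ ^ 2 = x ⬝ᵥ x := by
  rw [EuclideanSpace.real_norm_sq_eq]
  simp [dotProduct, sq]

lemma abs_dotProduct_le (x y : ι → ℝ) : |x ⬝ᵥ y| ≤ √(x ⬝ᵥ x) * √(y ⬝ᵥ y) := by
  rw [← Real.sqrt_mul (dotProduct_self_nonneg x)]
  apply Real.abs_le_sqrt
  simpa [dotProduct, sq] using Finset.sum_mul_sq_le_sq_mul_sq Finset.univ x y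

lemma dotProduct_transpose_mul_mulVec (B : Matrix κ ι ℝ) (x : ι → ℝ) :
    x ⬝ᵥ (Bᵀ * B) *ᵥ x = (B *ᵥ x) ⬝ᵥ (B *ᵥ x) := by
  rw [← mulVec_mulVec, dotProduct_mulVec, vecMul_transpose]

lemma dotProduct_indicator_compl (s : Set ι) (v w : ι → ℝ) :
    s.indicator v ⬝ᵥ sᶜ.indicator w = 0 :=
  Finset.sum_eq_zero fun j _ => by
    by_cases hj : j ∈ s <;> simp [hj]

lemma abs_dotProduct_mulVec_add_sub_le (A : Matrix κ ι ℝ) {x y : ι → ℝ} (hxy : x ⬝ᵥ y = 0)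
    {ρ ε σ : ℝ} (hρε : ρ * (1 + ε) ≤ 1) (hρσ : 2 * ρ ≤ σ)
    (hx : |(A *ᵥ x) ⬝ᵥ (A *ᵥ x) - ρ * (x ⬝ᵥ x)| ≤ ρ * ε * (x ⬝ᵥ x))
    (hy : (A *ᵥ y) ⬝ᵥ (A *ᵥ y) ≤ σ * (y ⬝ᵥ y)) :
    |(A *ᵥ (x + y)) ⬝ᵥ (A *ᵥ (x + y)) - ρ * ((x + y) ⬝ᵥ (x + y))|
      ≤ ρ * ε * (x ⬝ᵥ x) + 2 * √σ * (√(x ⬝ᵥ x) * √(y ⬝ᵥ y)) + (σ - ρ) * (y ⬝ᵥ y) := by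
  have hxx := dotProduct_self_nonneg x
  have hyy := dotProduct_self_nonneg y
  have hAx : (A *ᵥ x) ⬝ᵥ (A *ᵥ x) ≤ x ⬝ᵥ x := by
    nlinarith [(abs_le.mp hx).2]
  have hcross : |(A *ᵥ x) ⬝ᵥ (A *ᵥ y)| ≤ √σ * (√(x ⬝ᵥ x) * √(y ⬝ᵥ y)) := by
    calc |(A *ᵥ x) ⬝ᵥ (A *ᵥ y)| ≤ √((A *ᵥ x) ⬝ᵥ (A *ᵥ x)) * √((A *ᵥ y) ⬝ᵥ (A *ᵥ y)) :=
          abs_dotProduct_le _ _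
      _ ≤ √(x ⬝ᵥ x) * √(σ * (y ⬝ᵥ y)) := by gcongr
      _ = √σ * (√(x ⬝ᵥ x) * √(y ⬝ᵥ y)) := by
        rw [Real.sqrt_mul' _ hyy]
        ring
  have hexpand : (A *ᵥ (x + y)) ⬝ᵥ (A *ᵥ (x + y)) - ρ * ((x + y) ⬝ᵥ (x + y))
      = ((A *ᵥ x) ⬝ᵥ (A *ᵥ x) - ρ * (x ⬝ᵥ x)) + 2 * ((A *ᵥ x) ⬝ᵥ (A *ᵥ y))
        + ((A *ᵥ y) ⬝ᵥ (A *ᵥ y) - ρ * (y ⬝ᵥ y)) := by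
    simp only [mulVec_add, dotProduct_add, add_dotProduct, dotProduct_comm y x, hxy,
      dotProduct_comm (A *ᵥ y) (A *ᵥ x)]
    ring
  rw [hexpand, abs_le]
  have := dotProduct_self_nonneg (A *ᵥ y)
  constructor <;> nlinarith [abs_le.mp hx, abs_le.mp hcross]

variable [DecidableEq ι]

lemma dotProduct_mulVec_self_le (A : Matrix κ ι ℝ) (x : ι → ℝ) :
    (A *ᵥ x) ⬝ᵥ (A *ᵥ x) ≤ ‖A‖ ^ 2 * (x ⬝ᵥ x) := by
  rw [← norm_toLp_sq, ← norm_toLp_sq, ← mul_pow]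
  exact pow_le_pow_left₀ (norm_nonneg _) (A.l2_opNorm_mulVec _) 2

lemma abs_dotProduct_mulVec_le (M : Matrix ι ι ℝ) (x : ι → ℝ) :
    |x ⬝ᵥ M *ᵥ x| ≤ ‖M‖ * (x ⬝ᵥ x) := by
  have hMx : √((M *ᵥ x) ⬝ᵥ (M *ᵥ x)) ≤ ‖M‖ * √(x ⬝ᵥ x) := by
    rw [← Real.sqrt_sq (norm_nonneg M), ← Real.sqrt_mul (sq_nonneg _)]
    exact Real.sqrt_le_sqrt (dotProduct_mulVec_self_le M x)
  calc |x ⬝ᵥ M *ᵥ x| ≤ √(x ⬝ᵥ x) * √((M *ᵥ x) ⬝ᵥ (M *ᵥ x)) := abs_dotProduct_le _ _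
    _ ≤ √(x ⬝ᵥ x) * (‖M‖ * √(x ⬝ᵥ x)) := by gcongr
    _ = ‖M‖ * (x ⬝ᵥ x) := by
      rw [mul_left_comm, Real.mul_self_sqrt (dotProduct_self_nonneg x)]

lemma abs_dotProduct_mulVec_sub_le {c δ : ℝ} (hc : 0 < c) (B : Matrix κ ι ℝ)
    (h : ‖c⁻¹ • (Bᵀ * B) - 1‖ ≤ δ) (x : ι → ℝ) :
    |(B *ᵥ x) ⬝ᵥ (B *ᵥ x) - c * (x ⬝ᵥ x)| ≤ c * δ * (x ⬝ᵥ x) := by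
  have hB := (abs_dotProduct_mulVec_le _ x).trans
    (mul_le_mul_of_nonneg_right h (dotProduct_self_nonneg x))
  rw [sub_mulVec, smul_mulVec, one_mulVec, dotProduct_sub, dotProduct_smul, smul_eq_mul,
    dotProduct_transpose_mul_mulVec] at hB
  calc |(B *ᵥ x) ⬝ᵥ (B *ᵥ x) - c * (x ⬝ᵥ x)|
      = c * |c⁻¹ * ((B *ᵥ x) ⬝ᵥ (B *ᵥ x)) - x ⬝ᵥ x| := by
        rw [← abs_of_pos hc, ← abs_mul, abs_of_pos hc, mul_sub, mul_inv_cancel_left₀ hc.ne']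
    _ ≤ c * δ * (x ⬝ᵥ x) := by rw [mul_assoc]; gcongr

lemma opNorm_sq_le_of_norm_mul_transpose_sub_one_le [DecidableEq κ] (A : Matrix κ ι ℝ) {δ : ℝ}
    (h : ‖A * Aᵀ - 1‖ ≤ δ) : ‖A‖ ^ 2 ≤ 1 + δ := by
  have hone : ‖(1 : Matrix κ κ ℝ)‖ ≤ 1 := by
    rw [← l2_opNorm_toEuclideanCLM, map_one]
    exact ContinuousLinearMap.norm_id_le
  have hAAt : ‖A‖ ^ 2 = ‖A * Aᵀ‖ := by
    rw [← l2_opNorm_conjTranspose A, sq, ← l2_opNorm_conjTranspose_mul_self,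
      conjTranspose_conjTranspose, conjTranspose_eq_transpose_of_trivial]
  linarith [norm_sub_norm_le (A * Aᵀ) 1]

lemma le_dotProduct_diagonal_mulVec (s : Set ι) {p : ι → ℝ} {a c : ℝ}
    (ha : ∀ j ∈ s, a ≤ p j) (hc : ∀ j ∉ s, c ≤ p j) (v : ι → ℝ) :
    a * (s.indicator v ⬝ᵥ s.indicator v) + c * (sᶜ.indicator v ⬝ᵥ sᶜ.indicator v)
      ≤ v ⬝ᵥ diagonal p *ᵥ v := by
  simp only [dotProduct, mulVec_diagonal, Finset.mul_sum, ← Finset.sum_add_distrib]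
  gcongr with j
  by_cases hj : j ∈ s
  · simp only [Set.indicator_of_mem hj, Set.indicator_of_notMem (Set.notMem_compl_iff.mpr hj)]
    nlinarith [ha j hj, mul_self_nonneg (v j)]
  · simp only [Set.indicator_of_notMem hj, Set.indicator_of_mem (Set.mem_compl hj)]
    nlinarith [hc j hj, mul_self_nonneg (v j)]

lemma sub_one_mul_dotProduct_eq_of_eigen {D : Matrix ι ι ℝ} {A : Matrix κ ι ℝ} {ρ μ : ℝ}
    {v : ι → ℝ} (hP : IsUnit (D + ρ • 1).det)
    (h : ((D + ρ • 1)⁻¹ * (D + Aᵀ * A)) *ᵥ v = μ • v) :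
    (μ - 1) * (v ⬝ᵥ (D + ρ • 1) *ᵥ v) = (A *ᵥ v) ⬝ᵥ (A *ᵥ v) - ρ * (v ⬝ᵥ v) := by
  have hHv : (D + Aᵀ * A) *ᵥ v = μ • (D + ρ • 1) *ᵥ v := by
    have := congrArg ((D + ρ • 1) *ᵥ ·) h
    simpa only [mulVec_mulVec, ← mul_assoc, mul_nonsing_inv _ hP, one_mul, mulVec_smul]
      using this
  have hdot := congrArg (v ⬝ᵥ ·) hHv
  simp only [add_mulVec, dotProduct_add, dotProduct_transpose_mul_mulVec, dotProduct_smul,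
    smul_mulVec, one_mulVec, smul_eq_mul] at hdot ⊢
  linear_combination -hdot

lemma abs_sub_one_le_of_eigen {D : Matrix ι ι ℝ} {A : Matrix κ ι ℝ} {ρ μ K : ℝ} {v : ι → ℝ}
    (hP : (D + ρ • 1).PosDef) (hv0 : v ≠ 0)
    (h : ((D + ρ • 1)⁻¹ * (D + Aᵀ * A)) *ᵥ v = μ • v)
    (hK : |(A *ᵥ v) ⬝ᵥ (A *ᵥ v) - ρ * (v ⬝ᵥ v)| ≤ K * (v ⬝ᵥ (D + ρ • 1) *ᵥ v)) :
    |μ - 1| ≤ K := by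
  have hden : 0 < v ⬝ᵥ (D + ρ • 1) *ᵥ v := by simpa using hP.dotProduct_mulVec_pos hv0
  rw [← sub_one_mul_dotProduct_eq_of_eigen hP.det_pos.ne'.isUnit h, abs_mul,
    abs_of_pos hden] at hK
  exact le_of_mul_le_mul_right hK hden

end QuadraticForms

section ColumnRestriction

variable {R ι κ ι' : Type*} [NonUnitalNonAssocSemiring R] [Fintype ι] [Fintype ι']
  {g : ι' → ι} {x : ι → R}

lemma mulVec_eq_submatrix_mulVec_comp (A : Matrix κ ι R) (hg : g.Injective)
    (hx : ∀ j ∉ Set.range g, x j = 0) : A *ᵥ x = A.submatrix id g *ᵥ (x ∘ g) := by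
  funext i
  exact (Fintype.sum_of_injective g hg _ _ (fun j hj => by simp [hx j hj]) fun _ => rfl).symm

lemma dotProduct_eq_dotProduct_comp (hg : g.Injective) (hx : ∀ j ∉ Set.range g, x j = 0)
    (y : ι → R) : x ⬝ᵥ y = (x ∘ g) ⬝ᵥ (y ∘ g) :=
  (Fintype.sum_of_injective g hg _ _ (fun j hj => by simp [hx j hj]) fun _ => rfl).symm
end ColumnRestriction

/-- `c a b ≤ Q ρ a² + δ C b²` is AM–GM, the constant `Q` being chosen so that `4 Q ρ δ C = c²`
with `c = L + 2 s`; the remaining term `c b²` is absorbed by `Q C b²` since `4 ρ δ ≤ c`. -/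
lemma add_two_mul_sqrt_mul_sqrt_add_le {ρ δ C L s X Y : ℝ} (hρ : 0 < ρ) (hδ : 0 < δ) (hC : 0 < C)
    (hL : 0 ≤ L) (hs : 0 ≤ s) (hc : 4 * (ρ * δ) ≤ L + 2 * s) (hX : 0 ≤ X) (hY : 0 ≤ Y) :
    ρ * δ * X + 2 * s * (√X * √Y) + L * Y
      ≤ (δ + 1 / 4 * (L + 2 * s) ^ 2 / (ρ * δ * C)) * (ρ * X + C * Y) := by
  obtain ⟨a, ha, rfl⟩ : ∃ a, 0 ≤ a ∧ X = a ^ 2 := ⟨√X, Real.sqrt_nonneg X, (Real.sq_sqrt hX).symm⟩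
  obtain ⟨b, hb, rfl⟩ : ∃ b, 0 ≤ b ∧ Y = b ^ 2 := ⟨√Y, Real.sqrt_nonneg Y, (Real.sq_sqrt hY).symm⟩
  rw [Real.sqrt_sq ha, Real.sqrt_sq hb]
  set c := L + 2 * s
  set Q := 1 / 4 * c ^ 2 / (ρ * δ * C)
  have hρδ := mul_pos hρ hδ
  have hc0 : 0 < c := by linarith
  have hQ : 4 * (Q * ρ) * (δ * C) = c ^ 2 := by
    simp only [Q]
    field_simp
  have hQρ : 0 < Q * ρ := by positivity
  have hamgm : c * a * b ≤ Q * ρ * a ^ 2 + δ * C * b ^ 2 := by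
    nlinarith [sq_nonneg (2 * (Q * ρ) * a - c * b)]
  have hcQ : c ≤ Q * C := by
    have : Q * C * (4 * (ρ * δ)) = c * c := by linear_combination hQ
    nlinarith
  nlinarith [mul_nonneg ha hb, mul_nonneg (mul_nonneg hL ha) hb, sq_nonneg b]

lemma two_mul_cast_div_le_one {m n : ℕ} (hmn : 2 * m ≤ n) : 2 * ((m : ℝ) / n) ≤ 1 := by
  rw [← mul_div_assoc]
  exact div_le_one_of_le₀ (by exact_mod_cast hmn) (Nat.cast_nonneg n)

lemma PropP2.abs_dotProduct_mulVec_sub_le {m n k : ℕ} {A : Matrix (Fin m) (Fin n) ℝ} {δ : ℝ}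
    (h : PropP2 m n k A δ) (hm : 0 < m) (hn : 0 < n) {S : Finset (Fin n)} (hS : S.card = k)
    {x : Fin n → ℝ} (hx : ∀ j ∉ S, x j = 0) :
    |(A *ᵥ x) ⬝ᵥ (A *ᵥ x) - (m / n : ℝ) * (x ⬝ᵥ x)| ≤ (m / n : ℝ) * δ * (x ⬝ᵥ x) := by
  set g := S.orderEmbOfFin hS
  have hxg : ∀ j ∉ Set.range g, x j = 0 := by
    rw [Finset.range_orderEmbOfFin]
    exact hx
  rw [mulVec_eq_submatrix_mulVec_comp A g.injective hxg,
    dotProduct_eq_dotProduct_comp g.injective hxg]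
  refine _root_.abs_dotProduct_mulVec_sub_le (by positivity) _ ?_ _
  rw [inv_div]
  exact h g g.injective

lemma PropP2.abs_dotProduct_mulVec_sub_le_of_norm_mul_transpose_sub_one_le {m n k : ℕ}
    {A : Matrix (Fin m) (Fin n) ℝ} {δl δ : ℝ} (hP2 : PropP2 m n k A δl) (hδl : δl < 1)
    (hP1 : ‖A * Aᵀ - 1‖ ≤ δ) (hm : 0 < m) (hmn : 2 * m ≤ n) {S : Finset (Fin n)}
    (hS : S.card = k) (v : Fin n → ℝ) :
    |(A *ᵥ v) ⬝ᵥ (A *ᵥ v) - (m / n : ℝ) * (v ⬝ᵥ v)|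
      ≤ (m / n : ℝ) * δl * ((S : Set (Fin n)).indicator v ⬝ᵥ (S : Set (Fin n)).indicator v)
        + 2 * √(1 + δ) * (√((S : Set (Fin n)).indicator v ⬝ᵥ (S : Set (Fin n)).indicator v)
          * √((S : Set (Fin n))ᶜ.indicator v ⬝ᵥ (S : Set (Fin n))ᶜ.indicator v))
        + (1 + δ - m / n)
          * ((S : Set (Fin n))ᶜ.indicator v ⬝ᵥ (S : Set (Fin n))ᶜ.indicator v) := by
  have hρ : 0 ≤ (m / n : ℝ) := by positivity
  have hρ2 := two_mul_cast_div_le_one hmn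
  have hx := hP2.abs_dotProduct_mulVec_sub_le hm (by omega) hS
    (x := (S : Set (Fin n)).indicator v) fun j hj => Set.indicator_of_notMem hj v
  have hy := (dotProduct_mulVec_self_le A ((S : Set (Fin n))ᶜ.indicator v)).trans
    (mul_le_mul_of_nonneg_right (opNorm_sq_le_of_norm_mul_transpose_sub_one_le A hP1)
      (dotProduct_self_nonneg _))
  have hsplit := abs_dotProduct_mulVec_add_sub_le A (dotProduct_indicator_compl _ v v)
    (by nlinarith) (by linarith [norm_nonneg (A * Aᵀ - 1)]) hx hy
  rwa [Set.indicator_self_add_compl] at hsplit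

/-- Eigenvalue clustering of the preconditioned matrix `P⁻¹H` around 1
when the rows of `A` are nearly orthonormal (property P1: `‖AAᵀ − I_m‖₂ ≤ δ`),
where `H = Θ⁻¹ + AᵀA` and `P = Θ⁻¹ + ρ Iₙ`, `ρ = m/n`. -/
theorem eigenvalue_clustering_nearly_orthonormal_rows
    (m n : ℕ) (hmn : 2 * m ≤ n)
    (d : Fin n → ℝ) (hd : ∀ j, 0 < d j)
    (A : Matrix (Fin m) (Fin n) ℝ)
    (C : ℝ) (hC : 0 < C)
    (l : ℕ) (hl : l = (Finset.univ.filter fun j => (d j)⁻¹ < C).card)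
    (δl : ℝ) (hδl0 : 0 < δl) (hδl1 : δl < 1)
    (hP2 : PropP2 m n l A δl)
    (δ : ℝ) (hδ : 0 ≤ δ)
    (hP1 : ‖A * Aᵀ - 1‖ ≤ δ) :
    ∀ lam : ℝ,
      (∃ v : Fin n → ℝ, v ≠ 0 ∧
        ((Matrix.diagonal (fun j => (d j)⁻¹) + ((m : ℝ) / n) • (1 : Matrix (Fin n) (Fin n) ℝ))⁻¹
          * (Matrix.diagonal (fun j => (d j)⁻¹) + Aᵀ * A)).mulVec v = lam • v) →
      |lam - 1| ≤ δl + (1 / 4) * (1 + δ - (m : ℝ) / n + 2 * Real.sqrt (1 + δ)) ^ 2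
        / (((m : ℝ) / n) * δl * C) := by
  rintro lam ⟨v, hv0, hv⟩
  set ρ : ℝ := (m : ℝ) / n
  have hP : diagonal (fun j => (d j)⁻¹) + ρ • 1 = diagonal fun j => (d j)⁻¹ + ρ := by
    rw [smul_one_eq_diagonal, diagonal_add]
  have hPpos : (diagonal fun j => (d j)⁻¹ + ρ).PosDef :=
    posDef_diagonal_iff.mpr fun j => by have := hd j; positivity
  refine abs_sub_one_le_of_eigen (hP ▸ hPpos) hv0 hv ?_
  rw [hP]
  rcases Nat.eq_zero_or_pos m with rfl | hm
  -- for `m = 0` we have `ρ = 0`, and since `x / 0 = 0` the claimed bound degenerates to `δl`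
  · simpa [ρ] using mul_nonneg hδl0.le (hPpos.posSemidef.dotProduct_mulVec_nonneg v)
  have hρ : 0 < ρ := div_pos (by exact_mod_cast hm) (by exact_mod_cast (by omega : 0 < n))
  have hρ2 : 2 * ρ ≤ 1 := two_mul_cast_div_le_one hmn
  set S := Finset.univ.filter fun j => (d j)⁻¹ < C
  have hAv := hP2.abs_dotProduct_mulVec_sub_le_of_norm_mul_transpose_sub_one_le hδl1 hP1 hm hmn
    hl.symm v
  have hlow := le_dotProduct_diagonal_mulVec (S : Set (Fin n)) (a := ρ) (c := C)
    (p := fun j => (d j)⁻¹ + ρ) (fun j _ => le_add_of_nonneg_left (inv_pos.2 (hd j)).le)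
    (fun j hj => by simp [S] at hj; linarith) v
  have hs : 1 ≤ √(1 + δ) := Real.one_le_sqrt.mpr (by linarith)
  have hquad := add_two_mul_sqrt_mul_sqrt_add_le hρ hδl0 hC (L := 1 + δ - ρ) (s := √(1 + δ))
    (by linarith) (by linarith) (by nlinarith)
    (dotProduct_self_nonneg ((S : Set (Fin n)).indicator v))
    (dotProduct_self_nonneg ((S : Set (Fin n))ᶜ.indicator v))
  exact hAv.trans (hquad.trans (mul_le_mul_of_nonneg_left hlow (by positivity)))
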